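/- arXiv:1107.5720 — 5 statements merged into one kernel-verified Lean document; each statement's English description precedes it below -/
import Mathlib

section
/- With the setting and recursive definition of SHP_t(X) as above, a vector x₀ ∈ ℝ^d belongs to SHP_0(X) if and only if there exists an adapted process (V_t)_{t=0}^T of ℝ^d-valued random vectors with x₀ − V_0 ∈ K_0, V_{t−1}(ω) − V_t(ω̄) ∈ K_t(ω̄) for all t ∈ {1,...,T}, ω ∈ Ω_{t−1}, ω̄ ∈ succ(ω), and V_T(ω̄) = X(ω̄) for all ω̄ ∈ Ω_T. -/
open Pointwise

theorem shp_mem_iff_superhedging_strategy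
    (d T : ℕ) (ν : ℕ → Type) [∀ t, Fintype (ν t)] [∀ t, Nonempty (ν t)]
    [Unique (ν 0)]
    (parent : ∀ t, ν (t + 1) → ν t) (hsurj : ∀ t, Function.Surjective (parent t))
    (K : ∀ t, ν t → Set (Fin d → ℝ))
    (hKconv : ∀ t ω, Convex ℝ (K t ω))
    (hKcone : ∀ t ω, ∀ x ∈ K t ω, ∀ r : ℝ, 0 ≤ r → r • x ∈ K t ω)
    (hKorth : ∀ t ω, ∀ x : Fin d → ℝ, (∀ i, 0 ≤ x i) → x ∈ K t ω)
    (X : ν T → Fin d → ℝ)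
    (SHP : ∀ t, ν t → Set (Fin d → ℝ))
    (hterm : ∀ ω : ν T, SHP T ω = {X ω} + K T ω)
    (hrec : ∀ t, t < T → ∀ ω : ν t,
      SHP t ω = (⋂ ω' ∈ {b : ν (t + 1) | parent t b = ω}, SHP (t + 1) ω') + K t ω)
    (x₀ : Fin d → ℝ) :
    x₀ ∈ SHP 0 default ↔
      ∃ V : ∀ t, ν t → Fin d → ℝ,
        x₀ - V 0 default ∈ K 0 default ∧
        (∀ t, t < T → ∀ ω' : ν (t + 1),
          V t (parent t ω') - V (t + 1) ω' ∈ K (t + 1) ω') ∧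
        (∀ ω' : ν T, V T ω' = X ω') := by
  classical
  have hK0 : ∀ t ω, (0 : Fin d → ℝ) ∈ K t ω := fun t ω => hKorth t ω 0 (fun _ => le_refl 0)
  have hKadd : ∀ t ω, ∀ k1 ∈ K t ω, ∀ k2 ∈ K t ω, k1 + k2 ∈ K t ω := by
    intro t ω k1 h1 k2 h2
    have hmid := hKconv t ω h1 h2 (by norm_num : (0:ℝ) ≤ 1/2) (by norm_num : (0:ℝ) ≤ 1/2)
      (by norm_num)
    have h2' := hKcone t ω _ hmid 2 (by norm_num)
    have heq : (2:ℝ) • ((1/2:ℝ) • k1 + (1/2:ℝ) • k2) = k1 + k2 := by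
      rw [smul_add, smul_smul, smul_smul]; norm_num
    rwa [heq] at h2'
  -- SHP absorbs K
  have habsorb : ∀ t, t ≤ T → ∀ ω, ∀ v ∈ SHP t ω, ∀ k ∈ K t ω, v + k ∈ SHP t ω := by
    intro t ht ω v hv k hk
    rcases lt_or_eq_of_le ht with h | h
    · rw [hrec t h ω] at hv ⊢
      rw [Set.mem_add] at hv ⊢
      obtain ⟨a, ha, k', hk', rfl⟩ := hv
      exact ⟨a, ha, k' + k, hKadd t ω k' hk' k hk, (add_assoc _ _ _).symm⟩
    · subst h
      rw [hterm ω] at hv ⊢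
      rw [Set.mem_add] at hv ⊢
      obtain ⟨a, ha, k', hk', rfl⟩ := hv
      exact ⟨a, ha, k' + k, hKadd t ω k' hk' k hk, (add_assoc _ _ _).symm⟩
  constructor
  · intro hx
    have main : ∀ t, t ≤ T → ∃ V : ∀ s, ν s → Fin d → ℝ,
        x₀ - V 0 default ∈ K 0 default ∧
        (∀ s, s < t → ∀ ω' : ν (s + 1), V s (parent s ω') - V (s + 1) ω' ∈ K (s + 1) ω') ∧
        (∀ _ : t = T, ∀ ω : ν T, V T ω = X ω) ∧
        (t < T → ∀ ω' : ν (t + 1), V t (parent t ω') ∈ SHP (t + 1) ω') := by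
      intro t
      induction t with
      | zero =>
        intro _
        rcases Nat.eq_zero_or_pos T with hT | hT
        · subst hT
          rw [hterm default, Set.mem_add] at hx
          obtain ⟨a, ha, k, hk, hsum⟩ := hx
          rw [Set.mem_singleton_iff] at ha
          subst ha
          refine ⟨fun s _ => if s = 0 then X default else 0, ?_, ?_, ?_, ?_⟩
          · simp only [↓reduceIte]
            have : x₀ - X default = k := by rw [← hsum]; abel
            rwa [this]
          · intro s hs; omega
          · intro _ ω
            simp only [↓reduceIte]
            rw [Subsingleton.elim ω default]
          · intro h; omega
        · rw [hrec 0 hT default, Set.mem_add] at hx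
          obtain ⟨a, ha, k, hk, hsum⟩ := hx
          refine ⟨fun s _ => if s = 0 then a else 0, ?_, ?_, ?_, ?_⟩
          · simp only [↓reduceIte]
            have : x₀ - a = k := by rw [← hsum]; abel
            rwa [this]
          · intro s hs; omega
          · intro h; omega
          · intro _ ω'
            simp only [↓reduceIte]
            have hmem := Set.mem_iInter₂.mp ha ω' (by
              show parent 0 ω' = default
              exact Subsingleton.elim _ _)
            exact hmem
      | succ t ih =>
        intro ht
        obtain ⟨V, hV0, hVchain, _, hVinv⟩ := ih (le_of_lt ht)
        have hinv := hVinv ht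
        rcases lt_or_eq_of_le (Nat.succ_le_of_lt ht) with hT | hT
        · -- t + 1 < T
          have hchoice : ∀ ω' : ν (t + 1), ∃ a : Fin d → ℝ,
              (∀ ω'' : ν (t + 2), parent (t + 1) ω'' = ω' → a ∈ SHP (t + 2) ω'') ∧
              V t (parent t ω') - a ∈ K (t + 1) ω' := by
            intro ω'
            have h := hinv ω'
            rw [hrec (t + 1) hT ω', Set.mem_add] at h
            obtain ⟨a, ha, k, hk, hsum⟩ := h
            refine ⟨a, ?_, ?_⟩
            · intro ω'' hω''
              exact Set.mem_iInter₂.mp ha ω'' hω''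
            · have : V t (parent t ω') - a = k := by rw [← hsum]; abel
              rwa [this]
          choose a ha hk using hchoice
          refine ⟨Function.update V (t + 1) a, ?_, ?_, ?_, ?_⟩
          · rwa [Function.update_of_ne (by omega)]
          · intro s hs ω'
            rcases Nat.lt_or_ge s t with hst | hst
            · rw [Function.update_of_ne (by omega), Function.update_of_ne (by omega)]
              exact hVchain s hst ω'
            · have hst' : s = t := by omega
              subst hst'
              rw [Function.update_of_ne (by omega), Function.update_self]
              exact hk ω'
          · intro h; omega
          · intro _ ω''
            rw [Function.update_self]
            exact ha (parent (t + 1) ω'') ω'' rfl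
        · -- t + 1 = T
          subst hT
          have hchoice : ∀ ω' : ν (t + 1),
              V t (parent t ω') - X ω' ∈ K (t + 1) ω' := by
            intro ω'
            have h := hinv ω'
            rw [hterm ω', Set.mem_add] at h
            obtain ⟨b, hb, k, hkk, hsum⟩ := h
            rw [Set.mem_singleton_iff] at hb
            subst hb
            have : V t (parent t ω') - X ω' = k := by rw [← hsum]; abel
            rwa [this]
          refine ⟨Function.update V (t + 1) X, ?_, ?_, ?_, ?_⟩
          · rwa [Function.update_of_ne (by omega)]
          · intro s hs ω'
            rcases Nat.lt_or_ge s t with hst | hst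
            · rw [Function.update_of_ne (by omega), Function.update_of_ne (by omega)]
              exact hVchain s hst ω'
            · have hst' : s = t := by omega
              subst hst'
              rw [Function.update_of_ne (by omega), Function.update_self]
              exact hchoice ω'
          · intro _ ω
            rw [Function.update_self]
          · intro h; omega
    obtain ⟨V, hV0, hVchain, hVT, _⟩ := main T le_rfl
    exact ⟨V, hV0, hVchain, hVT rfl⟩
  · rintro ⟨V, h0, hchain, hfin⟩
    have claim : ∀ n t, t + n = T → ∀ ω : ν t, V t ω ∈ SHP t ω := by
      intro n
      induction n with
      | zero =>
        intro t htT ω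
        have : t = T := by omega
        subst this
        rw [hterm ω, Set.mem_add]
        exact ⟨X ω, Set.mem_singleton _, 0, hK0 t ω, by rw [add_zero, hfin ω]⟩
      | succ n ih =>
        intro t htT ω
        have htlt : t < T := by omega
        rw [hrec t htlt ω, Set.mem_add]
        refine ⟨V t ω, ?_, 0, hK0 t ω, add_zero _⟩
        rw [Set.mem_iInter₂]
        intro ω' hω'
        have hmem : V (t + 1) ω' ∈ SHP (t + 1) ω' := ih (t + 1) (by omega) ω'
        have hdiff : V t ω - V (t + 1) ω' ∈ K (t + 1) ω' := by
          have := hchain t htlt ω'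
          rwa [hω'] at this
        have := habsorb (t + 1) (by omega) ω' _ hmem _ hdiff
        have heq : V (t + 1) ω' + (V t ω - V (t + 1) ω') = V t ω := by abel
        rwa [heq] at this
    have hmem0 : V 0 default ∈ SHP 0 default := claim T 0 (by omega) default
    have := habsorb 0 (by omega) default _ hmem0 _ h0
    have heq : V 0 default + (x₀ - V 0 default) = x₀ := by abel
    rwa [heq] at this
end

section
/- With the recursive definition of SHP_t(X) as above, if for all t and all ω ∈ Ω_t one has ℝ^d_+ \ {0} ⊆ int K_t(ω), then the recession cone of SHP_t(X)(ω) contains K_t(ω), and hence ℝ^d_+ \ {0} ⊆ int((SHP_t(X)(ω))_∞) for every t and ω ∈ Ω_t. -/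
open Pointwise

/-- The recession cone of a convex set `A ⊆ ℝ^d`. -/
def recCone {d : ℕ} (A : Set (Fin d → ℝ)) : Set (Fin d → ℝ) :=
  {x | ∀ t : ℝ, 0 < t → ∀ a ∈ A, a + t • x ∈ A}

lemma add_mem_of_convex_of_smul_mem {E : Type*} [AddCommGroup E] [Module ℝ E] {K : Set E}
    (hconv : Convex ℝ K) (hcone : ∀ x ∈ K, ∀ r : ℝ, 0 ≤ r → r • x ∈ K)
    {a b : E} (ha : a ∈ K) (hb : b ∈ K) : a + b ∈ K := by
  have hmid : (1 / 2 : ℝ) • a + (1 / 2 : ℝ) • b ∈ K :=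
    hconv ha hb (by norm_num) (by norm_num) (by norm_num)
  have hdouble : (2 : ℝ) • ((1 / 2 : ℝ) • a + (1 / 2 : ℝ) • b) = a + b := by
    rw [smul_add, smul_smul, smul_smul]
    norm_num
  simpa only [hdouble] using hcone _ hmid 2 (by norm_num)

lemma subset_recCone_add {d : ℕ} {K : Set (Fin d → ℝ)} (hconv : Convex ℝ K)
    (hcone : ∀ x ∈ K, ∀ r : ℝ, 0 ≤ r → r • x ∈ K) (S : Set (Fin d → ℝ)) :
    K ⊆ recCone (S + K) := by
  rintro k hk t ht _ ⟨s, hs, c, hc, rfl⟩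
  have hck : c + t • k ∈ K :=
    add_mem_of_convex_of_smul_mem hconv hcone hc (hcone k hk t ht.le)
  exact ⟨s, hs, c + t • k, hck, (add_assoc s c (t • k)).symm⟩

theorem shp_recession_cone_general
    (d T : ℕ) (ν : ℕ → Type)
    (parent : ∀ t, ν (t + 1) → ν t)
    (K : ∀ t, ν t → Set (Fin d → ℝ))
    (hKconv : ∀ t ω, Convex ℝ (K t ω))
    (hKcone : ∀ t ω, ∀ x ∈ K t ω, ∀ r : ℝ, 0 ≤ r → r • x ∈ K t ω)
    (hKint : ∀ t ω, ∀ v : Fin d → ℝ, (∀ i, 0 ≤ v i) → v ≠ 0 →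
      v ∈ interior (K t ω))
    (X : ν T → Fin d → ℝ)
    (SHP : ∀ t, ν t → Set (Fin d → ℝ))
    (hterm : ∀ ω : ν T, SHP T ω = {X ω} + K T ω)
    (hrec : ∀ t, t < T → ∀ ω : ν t,
      SHP t ω = (⋂ ω' ∈ {b : ν (t + 1) | parent t b = ω}, SHP (t + 1) ω') + K t ω) :
    ∀ t, t ≤ T → ∀ ω : ν t,
      K t ω ⊆ recCone (SHP t ω) ∧
      (∀ v : Fin d → ℝ, (∀ i, 0 ≤ v i) → v ≠ 0 →
        v ∈ interior (recCone (SHP t ω))) := by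
  intro t htT ω
  have hsum : ∃ S, SHP t ω = S + K t ω := by
    rcases htT.lt_or_eq with hlt | rfl
    · exact ⟨_, hrec t hlt ω⟩
    · exact ⟨_, hterm ω⟩
  obtain ⟨S, hS⟩ := hsum
  have hsub : K t ω ⊆ recCone (SHP t ω) :=
    hS ▸ subset_recCone_add (hKconv t ω) (hKcone t ω) S
  exact ⟨hsub, fun v hv hv0 => interior_mono hsub (hKint t ω v hv hv0)⟩

theorem shp_recession_cone
    (d T : ℕ) (ν : ℕ → Type) [∀ t, Fintype (ν t)] [∀ t, Nonempty (ν t)]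
    (parent : ∀ t, ν (t + 1) → ν t) (hsurj : ∀ t, Function.Surjective (parent t))
    (K : ∀ t, ν t → Set (Fin d → ℝ))
    (hKconv : ∀ t ω, Convex ℝ (K t ω))
    (hKcone : ∀ t ω, ∀ x ∈ K t ω, ∀ r : ℝ, 0 ≤ r → r • x ∈ K t ω)
    (hKorth : ∀ t ω, ∀ x : Fin d → ℝ, (∀ i, 0 ≤ x i) → x ∈ K t ω)
    (hKint : ∀ t ω, ∀ v : Fin d → ℝ, (∀ i, 0 ≤ v i) → v ≠ 0 →
      v ∈ interior (K t ω))
    (X : ν T → Fin d → ℝ)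
    (SHP : ∀ t, ν t → Set (Fin d → ℝ))
    (hterm : ∀ ω : ν T, SHP T ω = {X ω} + K T ω)
    (hrec : ∀ t, t < T → ∀ ω : ν t,
      SHP t ω = (⋂ ω' ∈ {b : ν (t + 1) | parent t b = ω}, SHP (t + 1) ω') + K t ω) :
    ∀ t, t ≤ T → ∀ ω : ν t,
      K t ω ⊆ recCone (SHP t ω) ∧
      (∀ v : Fin d → ℝ, (∀ i, 0 ≤ v i) → v ≠ 0 →
        v ∈ interior (recCone (SHP t ω))) :=
  shp_recession_cone_general d T ν parent K hKconv hKcone hKint X SHP hterm hrec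
end

section
/- Let A ⊆ ℝ^d be a nonempty closed convex set with A ≠ ℝ^d whose recession cone C satisfies ℝ^d_+ \ {0} ⊆ int C, let y ∈ ℝ^d_+ \ {0}, and let x ∈ A. Then the linear program sup{α ≥ 0 : ∃ v ∈ A, ∃ k ∈ C, v + α·y + k = x} has a finite optimal value and the supremum is attained. -/
theorem max_withdrawal_attained
    (d : ℕ) (A : Set (Fin d → ℝ)) (hA : A.Nonempty) (hcl : IsClosed A)
    (hconv : Convex ℝ A) (hne : A ≠ Set.univ)
    (hint : ∀ v : Fin d → ℝ, (∀ i, 0 ≤ v i) → v ≠ 0 → v ∈ interior (recCone A))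
    (y : Fin d → ℝ) (hy : ∀ i, 0 ≤ y i) (hy0 : y ≠ 0)
    (x : Fin d → ℝ) (hx : x ∈ A) :
    ∃ α : ℝ, IsGreatest
      {α : ℝ | 0 ≤ α ∧ ∃ v ∈ A, ∃ k ∈ recCone A, v + α • y + k = x} α := by
  classical
  have hST : {α : ℝ | 0 ≤ α ∧ ∃ v ∈ A, ∃ k ∈ recCone A, v + α • y + k = x}
      = {α : ℝ | 0 ≤ α ∧ x - α • y ∈ A} := by
    ext α
    constructor
    · rintro ⟨hα, v, hv, k, hk, heq⟩
      refine ⟨hα, ?_⟩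
      have h1 : v + (1:ℝ) • k ∈ A := hk 1 one_pos v hv
      have h2 : x - α • y = v + (1:ℝ) • k := by rw [← heq]; module
      rw [h2]; exact h1
    · rintro ⟨hα, hmem⟩
      exact ⟨hα, x - α • y, hmem, 0, fun t ht a ha => by simpa using ha, by module⟩
  rw [hST]
  set T := {α : ℝ | 0 ≤ α ∧ x - α • y ∈ A} with hT
  have hT0 : (0:ℝ) ∈ T := ⟨le_refl 0, by simpa using hx⟩
  have hTclosed : IsClosed T := by
    have hTeq : T = Set.Ici (0:ℝ) ∩ (fun α : ℝ => x - α • y) ⁻¹' A := by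
      ext α; simp [hT, Set.mem_Ici]
    rw [hTeq]
    exact isClosed_Ici.inter (hcl.preimage (by continuity))
  have hTbdd : BddAbove T := by
    by_contra hbdd
    rw [not_bddAbove_iff] at hbdd
    have hxline : ∀ t : ℝ, 0 < t → x - t • y ∈ A := by
      intro t ht
      obtain ⟨α, ⟨hα0, hαA⟩, htα⟩ := hbdd t
      have hαpos : 0 < α := lt_trans ht htα
      have hcoef : t / α ≤ 1 := by
        rw [div_le_one hαpos]; exact le_of_lt htα
      have h1 : (1 - t/α) • x + (t/α) • (x - α • y) ∈ A :=
        hconv hx hαA (sub_nonneg.2 hcoef) (div_pos ht hαpos).le (by ring)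
      have h2 : (1 - t/α) • x + (t/α) • (x - α • y) = x - t • y := by
        rw [smul_sub, smul_smul, div_mul_cancel₀ t hαpos.ne']
        module
      rwa [h2] at h1
    have hrec : -y ∈ recCone A := by
      intro t ht a ha
      have key : ∀ n : ℕ, (1 - 1/(n+1 : ℝ)) • a + (1/(n+1 : ℝ)) • x - t • y ∈ A := by
        intro n
        have hn : (0:ℝ) < 1/(n+1) := by positivity
        have hn1 : 1/(n+1:ℝ) ≤ 1 := by
          rw [div_le_one (by positivity)]
          have : (0:ℝ) ≤ (n:ℝ) := Nat.cast_nonneg n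
          linarith
        have h1 := hconv ha (hxline (t * (n+1)) (by positivity))
          (sub_nonneg.2 hn1) hn.le (by ring)
        have h2 : (1 - 1/(n+1:ℝ)) • a + (1/(n+1:ℝ)) • (x - (t*(n+1)) • y)
            = (1 - 1/(n+1:ℝ)) • a + (1/(n+1:ℝ)) • x - t • y := by
          rw [smul_sub, smul_smul]
          have h3 : (1/(n+1:ℝ)) * (t*(n+1)) = t := by
            field_simp
          rw [h3]; module
        rwa [h2] at h1
      have h0 : Filter.Tendsto (fun n : ℕ => 1/(n+1 : ℝ)) Filter.atTop (nhds 0) :=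
        tendsto_one_div_add_atTop_nhds_zero_nat
      have hlim : Filter.Tendsto
          (fun n : ℕ => (1 - 1/(n+1 : ℝ)) • a + (1/(n+1 : ℝ)) • x - t • y)
          Filter.atTop (nhds (a + t • (-y))) := by
        have heq : a + t • (-y) = (1 - (0:ℝ)) • a + (0:ℝ) • x - t • y := by module
        rw [heq]
        exact (((tendsto_const_nhds.sub h0).smul tendsto_const_nhds).add
          (h0.smul tendsto_const_nhds)).sub tendsto_const_nhds
      exact hcl.mem_of_tendsto hlim (Filter.Eventually.of_forall key)
    have hyint := hint y hy hy0
    have hCconv : Convex ℝ (recCone A) := by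
      intro u hu v hv p q hp hq hpq
      intro t ht a ha
      have h1 := hconv (hu t ht a ha) (hv t ht a ha) hp hq hpq
      have h2 : p • (a + t • u) + q • (a + t • v) = (p+q) • a + t • (p • u + q • v) := by
        module
      rw [h2, hpq, one_smul] at h1
      exact h1
    have h0int : (0 : Fin d → ℝ) ∈ interior (recCone A) := by
      have h1 := hCconv.combo_interior_self_mem_interior hyint hrec
        (by norm_num : (0:ℝ) < 1/2) (by norm_num : (0:ℝ) ≤ 1/2) (by norm_num)
      have h2 : (1/2:ℝ) • y + (1/2:ℝ) • (-y) = 0 := by module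
      rwa [h2] at h1
    have hcone : ∀ (s : ℝ), 0 < s → ∀ u ∈ recCone A, s • u ∈ recCone A := by
      intro s hs u hu t ht a ha
      rw [smul_smul]
      exact hu (t*s) (by positivity) a ha
    have hCuniv : ∀ u : Fin d → ℝ, u ∈ recCone A := by
      intro u
      rcases eq_or_ne u 0 with rfl | hu0
      · intro t ht a ha; simpa using ha
      · obtain ⟨ε, hε, hball⟩ := Metric.isOpen_iff.1 isOpen_interior 0 h0int
        have hun : (0:ℝ) < ‖u‖ := norm_pos_iff.2 hu0
        set s := ε / (2 * ‖u‖) with hs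
        have hspos : 0 < s := by positivity
        have hval : s * ‖u‖ = ε / 2 := by
          rw [hs]; field_simp
        have hmem : s • u ∈ Metric.ball (0 : Fin d → ℝ) ε := by
          rw [mem_ball_zero_iff, norm_smul, Real.norm_eq_abs, abs_of_pos hspos, hval]
          linarith
        have h1 : s • u ∈ recCone A := interior_subset (hball hmem)
        have h2 := hcone (1/s) (by positivity) _ h1
        rwa [smul_smul, one_div, inv_mul_cancel₀ hspos.ne', one_smul] at h2
    exact hne (by
      ext z
      simp only [Set.mem_univ, iff_true]
      have h1 := hCuniv (z - x) 1 one_pos x hx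
      have h2 : x + (1:ℝ) • (z - x) = z := by module
      rwa [h2] at h1)
  exact ⟨sSup T, hTclosed.csSup_mem ⟨0, hT0⟩ hTbdd, fun b hb => le_csSup hTbdd hb⟩
end

section
/- Weak duality for geometric duality of linear vector optimization: Let P ∈ ℝ^{q×d}, B ∈ ℝ^{m×d}, b ∈ ℝ^m, let C ⊆ ℝ^q be a convex cone, fix c ∈ int C with c_q = 1, and define φ(y, y*) = Σ_{i=1}^{q−1} y_i y*_i + y_q (1 − Σ_{i=1}^{q−1} c_i y*_i) − y*_q. Let 𝒫 = {Px + z : Bx ≥ b, z ∈ C} and 𝒟* = {(w_1,...,w_{q−1}, bᵀu − s) : u ∈ ℝ^m_+, B^T u = P^T w, c^T w = 1, w ∈ C^+, s ≥ 0}. Then for every y ∈ 𝒫 and y* ∈ 𝒟*, φ(y, y*) ≥ 0. -/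
open Matrix

theorem geometric_weak_duality
    (q d m : ℕ)
    (P : Matrix (Fin (q + 1)) (Fin d) ℝ) (B : Matrix (Fin m) (Fin d) ℝ)
    (b : Fin m → ℝ)
    (C : Set (Fin (q + 1) → ℝ)) (hconv : Convex ℝ C)
    (hcone : ∀ z ∈ C, ∀ t : ℝ, 0 ≤ t → t • z ∈ C)
    (c : Fin (q + 1) → ℝ) (hc : c ∈ interior C) (hcq : c (Fin.last q) = 1)
    (φ : (Fin (q + 1) → ℝ) → (Fin (q + 1) → ℝ) → ℝ)
    (hφ : φ = fun y ys =>
      (∑ i : Fin q, y i.castSucc * ys i.castSucc) +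
        y (Fin.last q) * (1 - ∑ i : Fin q, c i.castSucc * ys i.castSucc) -
        ys (Fin.last q))
    (y ys : Fin (q + 1) → ℝ)
    (hy : ∃ (x : Fin d → ℝ) (z : Fin (q + 1) → ℝ),
      (∀ k, b k ≤ B.mulVec x k) ∧ z ∈ C ∧ y = P.mulVec x + z)
    (hys : ∃ (u : Fin m → ℝ) (w : Fin (q + 1) → ℝ) (s : ℝ),
      (∀ k, 0 ≤ u k) ∧ Bᵀ.mulVec u = Pᵀ.mulVec w ∧ (∑ i, c i * w i) = 1 ∧
      (∀ z ∈ C, 0 ≤ ∑ i, w i * z i) ∧ 0 ≤ s ∧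
      ys = fun i => if i = Fin.last q then b ⬝ᵥ u - s else w i) :
    0 ≤ φ y ys := by
  obtain ⟨x, z, hBx, hzC, hyeq⟩ := hy
  obtain ⟨u, w, s, hu, hBP, hcw, hwC, hs, hyseq⟩ := hys
  have hys_cast : ∀ i : Fin q, ys i.castSucc = w i.castSucc := by
    intro i
    simp [hyseq, (Fin.castSucc_lt_last i).ne]
  have hys_last : ys (Fin.last q) = b ⬝ᵥ u - s := by simp [hyseq]
  -- 1 - ∑_{i<q} c_i w_i = w_last
  have hsum : (1 : ℝ) - ∑ i : Fin q, c i.castSucc * w i.castSucc = w (Fin.last q) := by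
    have := hcw
    rw [Fin.sum_univ_castSucc] at this
    rw [hcq] at this
    linarith
  have hφval : φ y ys = (∑ i, w i * y i) - b ⬝ᵥ u + s := by
    rw [hφ]
    simp only [hys_last, hys_cast]
    rw [hsum, Fin.sum_univ_castSucc (f := fun i => w i * y i)]
    have hcomm : ∑ i : Fin q, y i.castSucc * w i.castSucc
        = ∑ i : Fin q, w i.castSucc * y i.castSucc := by
      exact Finset.sum_congr rfl (fun i _ => mul_comm _ _)
    rw [hcomm]; ring
  rw [hφval]
  have hwz : 0 ≤ ∑ i, w i * z i := hwC z hzC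
  have hkey : (∑ i, w i * (P.mulVec x) i) = ∑ k, u k * (B.mulVec x) k := by
    have h1 : (∑ i, w i * (P.mulVec x) i) = w ⬝ᵥ P.mulVec x := rfl
    have h2 : (∑ k, u k * (B.mulVec x) k) = u ⬝ᵥ B.mulVec x := rfl
    rw [h1, h2, Matrix.dotProduct_mulVec, Matrix.dotProduct_mulVec,
      ← Matrix.mulVec_transpose, ← Matrix.mulVec_transpose, hBP]
  have hbu : b ⬝ᵥ u ≤ ∑ k, u k * (B.mulVec x) k := by
    unfold dotProduct
    apply Finset.sum_le_sum
    intro k _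
    have := mul_le_mul_of_nonneg_left (hBx k) (hu k)
    linarith
  have hwy : (∑ i, w i * y i) = (∑ i, w i * (P.mulVec x) i) + ∑ i, w i * z i := by
    rw [hyeq, ← Finset.sum_add_distrib]
    apply Finset.sum_congr rfl
    intro i _
    simp [Pi.add_apply, mul_add]
  rw [hwy, hkey]
  linarith
end

section
/- Let S = {x ∈ ℝ^d : Bx ≥ b} be nonempty, P ∈ ℝ^{q×d}, and C ⊆ ℝ^q a polyhedral cone. Suppose the homogeneous upper image P[{x : Bx ≥ 0}] + C contains no line (equivalently the problem is 'bounded' in the appropriate sense). Then the upper image 𝒫 = P[S] + C is a polyhedron, and there exist finitely many points x¹,…,x^s ∈ S and directions x̂¹,…,x̂^t ∈ {x : Bx ≥ 0} such that 𝒫 = conv{Px¹,…,Px^s} + cone{Px̂¹,…,Px̂^t} + C. -/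
open Matrix Finset

namespace UpperImage

variable {q : ℕ}

/-- H-representation cone given by a finset of rows. -/
def coneH (F : Finset (Fin q → ℝ)) : Set (Fin q → ℝ) :=
  {x | ∀ a ∈ F, 0 ≤ a ⬝ᵥ x}

/-- finitely generated cone over an arbitrary finite index. -/
def fgCone {ι : Type*} [Fintype ι] (v : ι → Fin q → ℝ) : Set (Fin q → ℝ) :=
  {x | ∃ μ : ι → ℝ, (∀ i, 0 ≤ μ i) ∧ x = ∑ i, μ i • v i}

lemma fgCone_reindex {ι ι' : Type*} [Fintype ι] [Fintype ι'] (e : ι' ≃ ι)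
    (v : ι → Fin q → ℝ) : fgCone (v ∘ e) = fgCone v := by
  ext x
  constructor
  · rintro ⟨μ, hμ, rfl⟩
    exact ⟨μ ∘ e.symm, fun i => hμ _, by
      rw [← e.sum_comp (fun i => (μ ∘ e.symm) i • v i)]; simp⟩
  · rintro ⟨μ, hμ, rfl⟩
    exact ⟨μ ∘ e, fun i => hμ _, by
      rw [← e.sum_comp (fun i => μ i • v i)]; simp⟩


/-- Adding a single ray to an H-cone keeps it H-representable. -/
lemma coneH_add_ray (F : Finset (Fin q → ℝ)) (v : Fin q → ℝ) :
    ∃ G : Finset (Fin q → ℝ),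
      {y | ∃ x ∈ coneH F, ∃ t : ℝ, 0 ≤ t ∧ y = x + t • v} = coneH G := by
  classical
  refine ⟨F.filter (fun a => 0 ≤ a ⬝ᵥ v) ∪
    ((F ×ˢ F).filter (fun p => p.1 ⬝ᵥ v ≤ 0 ∧ 0 ≤ p.2 ⬝ᵥ v)).image
      (fun p => (p.2 ⬝ᵥ v) • p.1 - (p.1 ⬝ᵥ v) • p.2), ?_⟩
  ext y
  simp only [Set.mem_setOf_eq, coneH, mem_union, mem_filter, mem_image, mem_product]
  constructor
  · rintro ⟨x, hx, t, ht, rfl⟩ a ha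
    rcases ha with ⟨haF, hav⟩ | ⟨⟨a1, a2⟩, ⟨⟨h1, h2⟩, h1v, h2v⟩, rfl⟩
    · have := hx a haF
      simp only [dotProduct_add, dotProduct_smul, smul_eq_mul]
      positivity
    · have hx1 := hx a1 h1
      have hx2 := hx a2 h2
      simp only [sub_dotProduct, smul_dotProduct, dotProduct_add, dotProduct_smul,
        smul_eq_mul]
      nlinarith
  · intro hy
    -- choose t as max of 0 and lower bounds from rows with a ⬝ᵥ v < 0
    set Fneg := F.filter (fun a => a ⬝ᵥ v < 0) with hFneg
    set T : Finset ℝ := insert 0 (Fneg.image (fun a => (a ⬝ᵥ y) / (a ⬝ᵥ v))) with hT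
    have hTne : T.Nonempty := ⟨0, mem_insert_self _ _⟩
    set t := T.max' hTne with htdef
    have ht0 : (0:ℝ) ≤ t := le_max' _ _ (mem_insert_self _ _)
    refine ⟨y - t • v, ?_, t, ht0, by ring⟩
    intro a ha
    have key : t * (a ⬝ᵥ v) ≤ a ⬝ᵥ y := by
      rcases lt_or_ge (a ⬝ᵥ v) 0 with hav | hav
      · have hmT : (a ⬝ᵥ y) / (a ⬝ᵥ v) ∈ T := by
          rw [hT, hFneg]
          exact mem_insert_of_mem (mem_image_of_mem _ (mem_filter.2 ⟨ha, hav⟩))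
        have : (a ⬝ᵥ y) / (a ⬝ᵥ v) ≤ t := le_max' T _ hmT
        calc t * (a ⬝ᵥ v) ≤ ((a ⬝ᵥ y) / (a ⬝ᵥ v)) * (a ⬝ᵥ v) := by
              exact mul_le_mul_of_nonpos_right this hav.le
          _ = a ⬝ᵥ y := div_mul_cancel₀ _ hav.ne
      · -- a ⬝ᵥ v ≥ 0; t is attained by some element of T
        have hmem := T.max'_mem hTne
        rw [← htdef] at hmem
        rcases mem_insert.1 hmem with h0 | hIm
        · have hay : 0 ≤ a ⬝ᵥ y := hy a (Or.inl ⟨ha, hav⟩)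
          rw [h0]; linarith
        · rcases mem_image.1 hIm with ⟨a', ha', hEq⟩
          rcases mem_filter.1 ha' with ⟨ha'F, ha'v⟩
          have hpair : 0 ≤ ((a ⬝ᵥ v) • a' - (a' ⬝ᵥ v) • a) ⬝ᵥ y :=
            hy _ (Or.inr ⟨(a', a), ⟨⟨ha'F, ha⟩, ha'v.le, hav⟩, rfl⟩)
          simp only [sub_dotProduct, smul_dotProduct, smul_eq_mul] at hpair
          rw [← hEq]
          rw [div_mul_eq_mul_div, div_le_iff_of_neg ha'v]
          nlinarith
    have : 0 ≤ a ⬝ᵥ y - t * (a ⬝ᵥ v) := by linarith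
    simpa [dotProduct_sub, dotProduct_smul, smul_eq_mul] using this

lemma weyl_fin : ∀ (n : ℕ) (v : Fin n → Fin q → ℝ),
    ∃ G : Finset (Fin q → ℝ), fgCone v = coneH G := by
  intro n
  induction n with
  | zero =>
    intro v
    classical
    refine ⟨(univ.image (fun i : Fin q => Pi.single i (1:ℝ))) ∪
      (univ.image (fun i : Fin q => -Pi.single i (1:ℝ))), ?_⟩
    ext x
    simp only [fgCone, coneH, Set.mem_setOf_eq]
    constructor
    · rintro ⟨μ, -, rfl⟩ a ha
      simp
    · intro hx
      refine ⟨0, fun i => le_refl 0, ?_⟩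
      funext i
      have h1 : 0 ≤ Pi.single i (1:ℝ) ⬝ᵥ x :=
        hx _ (mem_union_left _ (mem_image_of_mem _ (mem_univ i)))
      have h2 : 0 ≤ (-Pi.single i (1:ℝ)) ⬝ᵥ x :=
        hx _ (mem_union_right _ (mem_image_of_mem _ (mem_univ i)))
      rw [single_dotProduct] at h1
      rw [neg_dotProduct, single_dotProduct] at h2
      simp only [one_mul] at h1 h2
      simp only [Fin.sum_univ_zero, Pi.zero_apply]
      linarith
  | succ n ih =>
    intro v
    obtain ⟨F, hF⟩ := ih (fun i => v i.castSucc)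
    obtain ⟨G, hG⟩ := coneH_add_ray F (v (Fin.last n))
    refine ⟨G, ?_⟩
    rw [← hG]
    ext y
    simp only [fgCone, Set.mem_setOf_eq]
    constructor
    · rintro ⟨μ, hμ, rfl⟩
      refine ⟨∑ i : Fin n, μ i.castSucc • v i.castSucc, ?_, μ (Fin.last n),
        hμ _, ?_⟩
      · rw [← hF]; exact ⟨fun i => μ i.castSucc, fun i => hμ _, rfl⟩
      · rw [Fin.sum_univ_castSucc]
    · rintro ⟨x, hx, t, ht, rfl⟩
      rw [← hF] at hx
      obtain ⟨μ, hμ, rfl⟩ := hx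
      refine ⟨Fin.snoc μ t, ?_, ?_⟩
      · intro i
        refine Fin.lastCases ?_ ?_ i
        · simpa [Fin.snoc_last] using ht
        · intro j; simpa using hμ j
      · rw [Fin.sum_univ_castSucc]
        simp [Fin.snoc_castSucc, Fin.snoc_last]

theorem weyl {ι : Type*} [Fintype ι] (v : ι → Fin q → ℝ) :
    ∃ G : Finset (Fin q → ℝ), fgCone v = coneH G := by
  obtain ⟨G, hG⟩ := weyl_fin (Fintype.card ι) (v ∘ (Fintype.equivFin ι).symm)
  exact ⟨G, by rw [← fgCone_reindex (Fintype.equivFin ι).symm v, hG]⟩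

lemma dotProduct_sum' {ι : Type*} (c : Fin q → ℝ) (s : Finset ι)
    (f : ι → Fin q → ℝ) : c ⬝ᵥ (∑ i ∈ s, f i) = ∑ i ∈ s, c ⬝ᵥ f i := by
  simp only [dotProduct, Finset.sum_apply, Finset.mul_sum]
  rw [Finset.sum_comm]

lemma sum_dotProduct' {ι : Type*} (c : Fin q → ℝ) (s : Finset ι)
    (f : ι → Fin q → ℝ) : (∑ i ∈ s, f i) ⬝ᵥ c = ∑ i ∈ s, f i ⬝ᵥ c := by
  simp only [dotProduct, Finset.sum_apply, Finset.sum_mul]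
  rw [Finset.sum_comm]


lemma mem_fgCone_self {ι : Type*} [Fintype ι] [DecidableEq ι]
    (v : ι → Fin q → ℝ) (i : ι) : v i ∈ fgCone v := by
  refine ⟨fun j => if j = i then 1 else 0, fun j => by positivity, ?_⟩
  simp only [ite_smul, one_smul, zero_smul]
  rw [Finset.sum_ite_eq' univ i v]
  simp

lemma dot_nonneg_of_mem_fgCone {ι : Type*} [Fintype ι] (v : ι → Fin q → ℝ)
    (c x : Fin q → ℝ) (hx : x ∈ fgCone v) (h : ∀ i, 0 ≤ c ⬝ᵥ v i) :
    0 ≤ c ⬝ᵥ x := by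
  obtain ⟨μ, hμ, rfl⟩ := hx
  rw [dotProduct_sum']
  refine Finset.sum_nonneg fun i _ => ?_
  rw [dotProduct_smul, smul_eq_mul]
  exact mul_nonneg (hμ i) (h i)

theorem minkowski (F : Finset (Fin q → ℝ)) :
    ∃ (N : ℕ) (w : Fin N → Fin q → ℝ), coneH F = fgCone w := by
  classical
  -- generators of the "dual data" cone
  set a : {x // x ∈ F} → Fin q → ℝ := fun x => (x : Fin q → ℝ) with ha
  obtain ⟨M, hM⟩ := weyl a
  set w : {x // x ∈ M} → Fin q → ℝ := fun x => (x : Fin q → ℝ) with hw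
  obtain ⟨Pf, hPf⟩ := weyl w
  refine ⟨Fintype.card {x // x ∈ M},
    w ∘ (Fintype.equivFin {x // x ∈ M}).symm, ?_⟩
  have hre : fgCone (w ∘ (Fintype.equivFin {x // x ∈ M}).symm) = fgCone w :=
    fgCone_reindex _ w
  rw [hre]
  ext x
  constructor
  · -- coneH F ⊆ fgCone w
    intro hx
    by_contra hnot
    rw [hPf] at hnot
    simp only [coneH, Set.mem_setOf_eq, not_forall] at hnot
    obtain ⟨p, hpPf, hpx⟩ := hnot
    push_neg at hpx
    -- p ∈ coneH M = fgCone a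
    have hpM : p ∈ coneH M := by
      intro mrow hm
      have : (w ⟨mrow, hm⟩) ∈ fgCone w := mem_fgCone_self w ⟨mrow, hm⟩
      rw [hPf] at this
      have := this p hpPf
      rwa [dotProduct_comm]
    rw [← hM] at hpM
    have : 0 ≤ p ⬝ᵥ x := by
      obtain ⟨μ, hμ, rfl⟩ := hpM
      rw [sum_dotProduct']
      refine Finset.sum_nonneg fun i _ => ?_
      rw [smul_dotProduct, smul_eq_mul]
      exact mul_nonneg (hμ i) (hx _ i.2)
    linarith
  · -- fgCone w ⊆ coneH F
    intro hx f hf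
    refine dot_nonneg_of_mem_fgCone w f x hx fun i => ?_
    have : (a ⟨f, hf⟩) ∈ fgCone a := mem_fgCone_self a ⟨f, hf⟩
    rw [hM] at this
    have := this (w i) i.2
    rwa [dotProduct_comm]

lemma snoc_dot {d : ℕ} (u : Fin d → ℝ) (c : ℝ) (w : Fin (d+1) → ℝ) :
    (Fin.snoc u c : Fin (d+1) → ℝ) ⬝ᵥ w = u ⬝ᵥ (Fin.init w) + c * w (Fin.last d) := by
  simp only [dotProduct]
  rw [Fin.sum_univ_castSucc]
  simp [Fin.init, Fin.snoc_castSucc, Fin.snoc_last]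

/-- Reindexing a sum over a finset via its `equivFin`. -/
lemma sum_equivFin {α M : Type*} [AddCommMonoid M] (s : Finset α) (f : α → M) :
    ∑ j : Fin s.card, f ((s.equivFin.symm j : s) : α) = ∑ i ∈ s, f i := by
  rw [← Finset.sum_coe_sort s f]
  exact Equiv.sum_comp s.equivFin.symm (fun a : s => f (a : α))

theorem polyhedron_decomp {d m : ℕ} (B : Matrix (Fin m) (Fin d) ℝ)
    (b : Fin m → ℝ) (hS : ∃ x : Fin d → ℝ, ∀ k, b k ≤ B.mulVec x k) :
    ∃ (s t : ℕ) (xs : Fin s → Fin d → ℝ) (xh : Fin t → Fin d → ℝ),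
      0 < s ∧ (∀ i k, b k ≤ B.mulVec (xs i) k) ∧
      (∀ j k, 0 ≤ B.mulVec (xh j) k) ∧
      ∀ x : Fin d → ℝ, (∀ k, b k ≤ B.mulVec x k) ↔
        ∃ (lam : Fin s → ℝ) (mu : Fin t → ℝ), (∀ i, 0 ≤ lam i) ∧
          (∑ i, lam i) = 1 ∧ (∀ j, 0 ≤ mu j) ∧
          x = (∑ i, lam i • xs i) + ∑ j, mu j • xh j := by
  classical
  set Ghat : Finset (Fin (d+1) → ℝ) :=
    (univ.image fun k : Fin m => (Fin.snoc (B k) (-(b k)) : Fin (d+1) → ℝ)) ∪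
      {Pi.single (Fin.last d) 1} with hGhat
  obtain ⟨N, w, hw⟩ := minkowski Ghat
  -- basic facts about coneH Ghat
  have hmem : ∀ v : Fin (d+1) → ℝ, v ∈ coneH Ghat ↔
      ((∀ k, b k * v (Fin.last d) ≤ B.mulVec (Fin.init v) k) ∧ 0 ≤ v (Fin.last d)) := by
    intro v
    constructor
    · intro hv
      constructor
      · intro k
        have := hv _ (mem_union_left _ (mem_image_of_mem _ (mem_univ k)))
        rw [snoc_dot] at this
        have : 0 ≤ B k ⬝ᵥ Fin.init v + -(b k) * v (Fin.last d) := this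
        simp only [mulVec]
        linarith
      · have := hv _ (mem_union_right _ (mem_singleton_self _))
        rwa [single_dotProduct, one_mul] at this
    · rintro ⟨h1, h2⟩ a ha
      rcases mem_union.1 ha with h | h
      · obtain ⟨k, -, rfl⟩ := mem_image.1 h
        rw [snoc_dot]
        have := h1 k
        simp only [mulVec] at this
        linarith
      · rw [mem_singleton.1 h, single_dotProduct, one_mul]
        exact h2
  -- membership of x in S in terms of the cone
  have hSx : ∀ x : Fin d → ℝ, (∀ k, b k ≤ B.mulVec x k) ↔
      (Fin.snoc x 1 : Fin (d+1) → ℝ) ∈ coneH Ghat := by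
    intro x
    rw [hmem]
    simp [Fin.init_snoc, Fin.snoc_last]
  -- each generator
  have hwgen : ∀ i, w i ∈ coneH Ghat := by
    intro i
    rw [hw]; exact mem_fgCone_self w i
  have hwlast : ∀ i, 0 ≤ w i (Fin.last d) := fun i => ((hmem _).1 (hwgen i)).2
  have hwrow : ∀ i k, b k * w i (Fin.last d) ≤ B.mulVec (Fin.init (w i)) k :=
    fun i k => ((hmem _).1 (hwgen i)).1 k
  -- split indices
  set Ip : Finset (Fin N) := univ.filter (fun i => 0 < w i (Fin.last d)) with hIp
  set I0 : Finset (Fin N) := univ.filter (fun i => ¬ 0 < w i (Fin.last d)) with hI0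
  have hI0last : ∀ i ∈ I0, w i (Fin.last d) = 0 := by
    intro i hi
    have := (mem_filter.1 hi).2
    have := hwlast i
    linarith
  set s := Ip.card
  set t := I0.card
  set ep := Ip.equivFin
  set e0 := I0.equivFin
  have hposgen : ∀ i : Fin N, 0 < w i (Fin.last d) →
      ∀ k, b k ≤ B.mulVec ((w i (Fin.last d))⁻¹ • Fin.init (w i)) k := by
    intro i hpos k
    have := hwrow i k
    rw [mulVec_smul]
    have h2 : b k * w i (Fin.last d) * (w i (Fin.last d))⁻¹ ≤
        B.mulVec (Fin.init (w i)) k * (w i (Fin.last d))⁻¹ :=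
      mul_le_mul_of_nonneg_right this (by positivity)
    rw [mul_assoc, mul_inv_cancel₀ hpos.ne', mul_one] at h2
    simpa [Pi.smul_apply, smul_eq_mul, mul_comm] using h2
  have h0gen : ∀ i : Fin N, w i (Fin.last d) = 0 →
      ∀ k, 0 ≤ B.mulVec (Fin.init (w i)) k := by
    intro i h0 k
    have := hwrow i k
    rw [h0] at this
    linarith
  set xs : Fin s → Fin d → ℝ :=
    fun j => (w ((ep.symm j : Ip) : Fin N) (Fin.last d))⁻¹ •
      Fin.init (w ((ep.symm j : Ip) : Fin N)) with hxs
  set xh : Fin t → Fin d → ℝ :=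
    fun j => Fin.init (w ((e0.symm j : I0) : Fin N)) with hxh
  have hxsS : ∀ j k, b k ≤ B.mulVec (xs j) k :=
    fun j k => hposgen _ (mem_filter.1 (ep.symm j).2).2 k
  have hxhS : ∀ j k, 0 ≤ B.mulVec (xh j) k :=
    fun j k => h0gen _ (hI0last _ (e0.symm j).2) k
  refine ⟨s, t, xs, xh, ?_, hxsS, hxhS, ?_⟩
  · -- s > 0
    obtain ⟨x0, hx0⟩ := hS
    have := (hSx x0).1 hx0
    rw [hw] at this
    obtain ⟨μ, hμ, hxeq⟩ := this
    have hlast : (1:ℝ) = ∑ i, μ i * w i (Fin.last d) := by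
      have := congrFun hxeq (Fin.last d)
      simpa [Fin.snoc_last, Finset.sum_apply] using this
    by_contra hs
    push_neg at hs
    have hIpempty : Ip = ∅ := Finset.card_eq_zero.1 (Nat.le_zero.1 hs)
    have : ∑ i, μ i * w i (Fin.last d) = 0 := by
      refine Finset.sum_eq_zero fun i _ => ?_
      have hi0 : i ∈ I0 := by
        rw [hI0, mem_filter]
        refine ⟨mem_univ _, fun hpos => ?_⟩
        have : i ∈ Ip := by rw [hIp, mem_filter]; exact ⟨mem_univ _, hpos⟩
        rw [hIpempty] at this; exact absurd this (notMem_empty i)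
      rw [hI0last i hi0, mul_zero]
    rw [← hlast] at this
    norm_num at this
  · intro x
    constructor
    · intro hxS
      rw [hSx x, hw] at hxS
      obtain ⟨μ, hμ, hxeq⟩ := hxS
      refine ⟨fun j => μ ((ep.symm j : Ip) : Fin N) *
          w ((ep.symm j : Ip) : Fin N) (Fin.last d),
        fun j => μ ((e0.symm j : I0) : Fin N), ?_, ?_, fun j => hμ _, ?_⟩
      · intro j
        exact mul_nonneg (hμ _) (hwlast _)
      · rw [sum_equivFin Ip (fun i => μ i * w i (Fin.last d))]
        have hlast : (1:ℝ) = ∑ i, μ i * w i (Fin.last d) := by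
          have := congrFun hxeq (Fin.last d)
          simpa [Fin.snoc_last, Finset.sum_apply] using this
        rw [← Finset.sum_filter_add_sum_filter_not univ
          (fun i => 0 < w i (Fin.last d)) (fun i => μ i * w i (Fin.last d))] at hlast
        have h0 : ∑ i ∈ I0, μ i * w i (Fin.last d) = 0 :=
          Finset.sum_eq_zero fun i hi => by rw [hI0last i hi, mul_zero]
        rw [hIp]
        rw [hI0] at h0
        rw [h0, add_zero] at hlast
        exact hlast.symm
      · -- x = ∑ lam • xs + ∑ mu • xh
        have hx : x = ∑ i, μ i • Fin.init (w i) := by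
          funext j
          have := congrFun hxeq (Fin.castSucc j)
          simpa [Fin.snoc_castSucc, Finset.sum_apply, Fin.init] using this
        rw [hx,
          ← Finset.sum_filter_add_sum_filter_not univ
            (fun i => 0 < w i (Fin.last d)) (fun i => μ i • Fin.init (w i))]
        congr 1
        · rw [← hIp]
          rw [← sum_equivFin Ip (fun i => μ i • Fin.init (w i))]
          refine Finset.sum_congr rfl fun j _ => ?_
          have hpos : 0 < w ((ep.symm j : Ip) : Fin N) (Fin.last d) :=
            (mem_filter.1 (ep.symm j).2).2
          show μ _ • Fin.init (w _) = _
          rw [hxs]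
          rw [smul_smul, mul_assoc, mul_inv_cancel₀ hpos.ne', mul_one]
        · rw [← hI0]
          rw [← sum_equivFin I0 (fun i => μ i • Fin.init (w i))]
    · rintro ⟨lam, mu, hlam, hlam1, hmu, rfl⟩
      intro k
      have hBx : ∀ y : Fin d → ℝ, B.mulVec y k = B k ⬝ᵥ y := fun y => rfl
      rw [hBx, dotProduct_add, dotProduct_sum', dotProduct_sum']
      have h1 : ∑ i, B k ⬝ᵥ (lam i • xs i) = ∑ i, lam i * (B.mulVec (xs i) k) := by
        refine Finset.sum_congr rfl fun i _ => ?_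
        rw [dotProduct_smul, smul_eq_mul, hBx]
      have h2 : ∑ j, B k ⬝ᵥ (mu j • xh j) = ∑ j, mu j * (B.mulVec (xh j) k) := by
        refine Finset.sum_congr rfl fun j _ => ?_
        rw [dotProduct_smul, smul_eq_mul, hBx]
      rw [h1, h2]
      have hge1 : ∑ i, lam i * (B.mulVec (xs i) k) ≥ ∑ i, lam i * b k := by
        refine Finset.sum_le_sum fun i _ => ?_
        exact mul_le_mul_of_nonneg_left (hxsS i k) (hlam i)
      have hge2 : (0:ℝ) ≤ ∑ j, mu j * (B.mulVec (xh j) k) :=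
        Finset.sum_nonneg fun j _ => mul_nonneg (hmu j) (hxhS j k)
      have : ∑ i, lam i * b k = b k := by rw [← Finset.sum_mul, hlam1, one_mul]
      linarith


lemma snoc_sum {ι : Type*} (s : Finset ι) (f : ι → Fin q → ℝ) (c : ι → ℝ) :
    ∑ i ∈ s, (Fin.snoc (f i) (c i) : Fin (q+1) → ℝ) =
      Fin.snoc (∑ i ∈ s, f i) (∑ i ∈ s, c i) := by
  funext j
  refine Fin.lastCases ?_ ?_ j
  · simp [Finset.sum_apply, Fin.snoc_last]
  · intro j'
    simp [Finset.sum_apply, Fin.snoc_castSucc]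

lemma snoc_add {a b : Fin q → ℝ} {c e : ℝ} :
    (Fin.snoc a c : Fin (q+1) → ℝ) + Fin.snoc b e = Fin.snoc (a + b) (c + e) := by
  funext j
  refine Fin.lastCases ?_ ?_ j <;> simp [Fin.snoc_last, Fin.snoc_castSucc]

lemma smul_snoc (r : ℝ) (a : Fin q → ℝ) (c : ℝ) :
    r • (Fin.snoc a c : Fin (q+1) → ℝ) = Fin.snoc (r • a) (r * c) := by
  funext j
  refine Fin.lastCases ?_ ?_ j <;> simp [Fin.snoc_last, Fin.snoc_castSucc]

lemma snoc_inj {a b : Fin q → ℝ} {c e : ℝ}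
    (h : (Fin.snoc a c : Fin (q+1) → ℝ) = Fin.snoc b e) : a = b ∧ c = e := by
  constructor
  · have := congrArg Fin.init h
    rwa [Fin.init_snoc, Fin.init_snoc] at this
  · have := congrFun h (Fin.last q)
    rwa [Fin.snoc_last, Fin.snoc_last] at this

lemma mulVec_sum' {d : ℕ} {ι : Type*} (s : Finset ι) (P : Matrix (Fin q) (Fin d) ℝ)
    (f : ι → Fin d → ℝ) :
    P.mulVec (∑ i ∈ s, f i) = ∑ i ∈ s, P.mulVec (f i) := by
  funext k
  rw [show P.mulVec (∑ i ∈ s, f i) k = P k ⬝ᵥ (∑ i ∈ s, f i) from rfl,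
    dotProduct_sum', Finset.sum_apply]
  rfl


end UpperImage

open UpperImage

theorem upper_image_polyhedral_V_representation
    (q d m : ℕ) (P : Matrix (Fin q) (Fin d) ℝ) (B : Matrix (Fin m) (Fin d) ℝ)
    (b : Fin m → ℝ) (hS : ∃ x : Fin d → ℝ, ∀ k, b k ≤ B.mulVec x k)
    (C : Set (Fin q → ℝ))
    (hC : ∃ (n : ℕ) (g : Fin n → Fin q → ℝ),
      C = {z : Fin q → ℝ | ∃ μ : Fin n → ℝ, (∀ k, 0 ≤ μ k) ∧ z = ∑ k, μ k • g k})
    (hnoline : ∀ y : Fin q → ℝ,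
      (∃ (x : Fin d → ℝ) (z : Fin q → ℝ),
        (∀ k, 0 ≤ B.mulVec x k) ∧ z ∈ C ∧ y = P.mulVec x + z) →
      (∃ (x : Fin d → ℝ) (z : Fin q → ℝ),
        (∀ k, 0 ≤ B.mulVec x k) ∧ z ∈ C ∧ -y = P.mulVec x + z) →
      y = 0) :
    (∃ (n' : ℕ) (M : Matrix (Fin n') (Fin q) ℝ) (β : Fin n' → ℝ),
      {y : Fin q → ℝ | ∃ (x : Fin d → ℝ) (z : Fin q → ℝ),
          (∀ k, b k ≤ B.mulVec x k) ∧ z ∈ C ∧ y = P.mulVec x + z}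
        = {y : Fin q → ℝ | ∀ k, β k ≤ M.mulVec y k}) ∧
    ∃ (s t : ℕ) (xs : Fin s → Fin d → ℝ) (xh : Fin t → Fin d → ℝ),
      0 < s ∧ (∀ i, ∀ k, b k ≤ B.mulVec (xs i) k) ∧
      (∀ j, ∀ k, 0 ≤ B.mulVec (xh j) k) ∧
      {y : Fin q → ℝ | ∃ (x : Fin d → ℝ) (z : Fin q → ℝ),
          (∀ k, b k ≤ B.mulVec x k) ∧ z ∈ C ∧ y = P.mulVec x + z}
        = {y : Fin q → ℝ | ∃ (lam : Fin s → ℝ) (mu : Fin t → ℝ) (z : Fin q → ℝ),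
            (∀ i, 0 ≤ lam i) ∧ (∑ i, lam i) = 1 ∧ (∀ j, 0 ≤ mu j) ∧ z ∈ C ∧
            y = (∑ i, lam i • P.mulVec (xs i)) +
                (∑ j, mu j • P.mulVec (xh j)) + z} := by
  classical
  obtain ⟨s, t, xs, xh, hs, hxsS, hxhS, hiff⟩ := polyhedron_decomp B b hS
  -- the key linearity computation
  have hcombo : ∀ (lam : Fin s → ℝ) (mu : Fin t → ℝ),
      P.mulVec ((∑ i, lam i • xs i) + ∑ j, mu j • xh j) =
        (∑ i, lam i • P.mulVec (xs i)) + ∑ j, mu j • P.mulVec (xh j) := by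
    intro lam mu
    rw [mulVec_add, mulVec_sum', mulVec_sum']
    congr 1 <;> exact Finset.sum_congr rfl fun i _ => by rw [mulVec_smul]
  -- Part 2 equality
  have hPart2 :
      {y : Fin q → ℝ | ∃ (x : Fin d → ℝ) (z : Fin q → ℝ),
          (∀ k, b k ≤ B.mulVec x k) ∧ z ∈ C ∧ y = P.mulVec x + z}
        = {y : Fin q → ℝ | ∃ (lam : Fin s → ℝ) (mu : Fin t → ℝ) (z : Fin q → ℝ),
            (∀ i, 0 ≤ lam i) ∧ (∑ i, lam i) = 1 ∧ (∀ j, 0 ≤ mu j) ∧ z ∈ C ∧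
            y = (∑ i, lam i • P.mulVec (xs i)) +
                (∑ j, mu j • P.mulVec (xh j)) + z} := by
    ext y
    simp only [Set.mem_setOf_eq]
    constructor
    · rintro ⟨x, z, hx, hz, rfl⟩
      obtain ⟨lam, mu, hlam, hlam1, hmu, hxeq⟩ := (hiff x).1 hx
      refine ⟨lam, mu, z, hlam, hlam1, hmu, hz, ?_⟩
      rw [hxeq, hcombo, add_assoc]
    · rintro ⟨lam, mu, z, hlam, hlam1, hmu, hz, rfl⟩
      refine ⟨(∑ i, lam i • xs i) + ∑ j, mu j • xh j, z,
        (hiff _).2 ⟨lam, mu, hlam, hlam1, hmu, rfl⟩, hz, ?_⟩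
      rw [hcombo, add_assoc]
  refine ⟨?_, s, t, xs, xh, hs, hxsS, hxhS, hPart2⟩
  -- Part 1 : H-representation
  obtain ⟨n, g, hCeq⟩ := hC
  set u : (Fin s ⊕ (Fin t ⊕ Fin n)) → Fin (q+1) → ℝ :=
    Sum.elim (fun i => (Fin.snoc (P.mulVec (xs i)) 1 : Fin (q+1) → ℝ))
      (Sum.elim (fun j => (Fin.snoc (P.mulVec (xh j)) 0 : Fin (q+1) → ℝ))
        (fun k => (Fin.snoc (g k) 0 : Fin (q+1) → ℝ))) with hu
  -- key homogenization claim
  have hclaim : ∀ y : Fin q → ℝ,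
      (∃ (lam : Fin s → ℝ) (mu : Fin t → ℝ) (z : Fin q → ℝ),
        (∀ i, 0 ≤ lam i) ∧ (∑ i, lam i) = 1 ∧ (∀ j, 0 ≤ mu j) ∧ z ∈ C ∧
        y = (∑ i, lam i • P.mulVec (xs i)) +
            (∑ j, mu j • P.mulVec (xh j)) + z) ↔
      (Fin.snoc y 1 : Fin (q+1) → ℝ) ∈ fgCone u := by
    intro y
    constructor
    · rintro ⟨lam, mu, z, hlam, hlam1, hmu, hz, rfl⟩
      rw [hCeq] at hz
      obtain ⟨ν, hν, rfl⟩ := hz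
      refine ⟨Sum.elim lam (Sum.elim mu ν), ?_, ?_⟩
      · rintro (i | j | k)
        exacts [hlam i, hmu j, hν k]
      · rw [Fintype.sum_sum_type, Fintype.sum_sum_type]
        simp only [Sum.elim_inl, Sum.elim_inr, hu]
        have e1 : ∀ i : Fin s, lam i • (Fin.snoc (P.mulVec (xs i)) 1 : Fin (q+1) → ℝ)
            = Fin.snoc (lam i • P.mulVec (xs i)) (lam i * 1) := fun i => smul_snoc _ _ _
        have e2 : ∀ j : Fin t, mu j • (Fin.snoc (P.mulVec (xh j)) 0 : Fin (q+1) → ℝ)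
            = Fin.snoc (mu j • P.mulVec (xh j)) (mu j * 0) := fun j => smul_snoc _ _ _
        have e3 : ∀ k : Fin n, ν k • (Fin.snoc (g k) 0 : Fin (q+1) → ℝ)
            = Fin.snoc (ν k • g k) (ν k * 0) := fun k => smul_snoc _ _ _
        simp only [e1, e2, e3]
        rw [snoc_sum, snoc_sum, snoc_sum, snoc_add, snoc_add]
        have hone : (∑ i : Fin s, lam i * 1) +
            ((∑ j : Fin t, mu j * 0) + ∑ k : Fin n, ν k * 0) = 1 := by
          simp [hlam1]
        rw [hone, add_assoc]
    · rintro ⟨μ, hμ, hyeq⟩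
      rw [Fintype.sum_sum_type, Fintype.sum_sum_type] at hyeq
      simp only [Sum.elim_inl, Sum.elim_inr, hu] at hyeq
      have e1 : ∀ i : Fin s, μ (Sum.inl i) • (Fin.snoc (P.mulVec (xs i)) 1 : Fin (q+1) → ℝ)
          = Fin.snoc (μ (Sum.inl i) • P.mulVec (xs i)) (μ (Sum.inl i) * 1) :=
        fun i => smul_snoc _ _ _
      have e2 : ∀ j : Fin t, μ (Sum.inr (Sum.inl j)) • (Fin.snoc (P.mulVec (xh j)) 0 : Fin (q+1) → ℝ)
          = Fin.snoc (μ (Sum.inr (Sum.inl j)) • P.mulVec (xh j)) (μ (Sum.inr (Sum.inl j)) * 0) :=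
        fun j => smul_snoc _ _ _
      have e3 : ∀ k : Fin n, μ (Sum.inr (Sum.inr k)) • (Fin.snoc (g k) 0 : Fin (q+1) → ℝ)
          = Fin.snoc (μ (Sum.inr (Sum.inr k)) • g k) (μ (Sum.inr (Sum.inr k)) * 0) :=
        fun k => smul_snoc _ _ _
      simp only [e1, e2, e3] at hyeq
      rw [snoc_sum, snoc_sum, snoc_sum, snoc_add, snoc_add] at hyeq
      obtain ⟨hy, h1⟩ := snoc_inj hyeq
      refine ⟨fun i => μ (Sum.inl i), fun j => μ (Sum.inr (Sum.inl j)),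
        ∑ k, μ (Sum.inr (Sum.inr k)) • g k,
        fun i => hμ _, ?_, fun j => hμ _, ?_, ?_⟩
      · simpa using h1.symm
      · rw [hCeq]
        exact ⟨fun k => μ (Sum.inr (Sum.inr k)), fun k => hμ _, rfl⟩
      · rw [hy, add_assoc]
  obtain ⟨G, hG⟩ := weyl u
  refine ⟨G.card, Matrix.of (fun i => Fin.init ((G.equivFin.symm i : G) : Fin (q+1) → ℝ)),
    fun i => -(((G.equivFin.symm i : G) : Fin (q+1) → ℝ) (Fin.last q)), ?_⟩
  rw [hPart2]
  ext y
  simp only [Set.mem_setOf_eq]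
  rw [hclaim y, hG]
  constructor
  · intro hy i
    have := hy _ (G.equivFin.symm i).2
    set a : Fin (q+1) → ℝ := ((G.equivFin.symm i : G) : Fin (q+1) → ℝ) with hadef
    have ha : a = Fin.snoc (Fin.init a) (a (Fin.last q)) := (Fin.snoc_init_self a).symm
    rw [ha, snoc_dot, Fin.init_snoc, Fin.snoc_last, mul_one] at this
    have hMy : (Matrix.of (fun i => Fin.init ((G.equivFin.symm i : G) : Fin (q+1) → ℝ))).mulVec y i
        = Fin.init a ⬝ᵥ y := rfl
    rw [hMy]
    linarith
  · intro hy a haG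
    have := hy (G.equivFin ⟨a, haG⟩)
    simp only [Equiv.symm_apply_apply] at this
    have hMy : (Matrix.of (fun i => Fin.init ((G.equivFin.symm i : G) : Fin (q+1) → ℝ))).mulVec y
        (G.equivFin ⟨a, haG⟩) = Fin.init ((G.equivFin.symm (G.equivFin ⟨a, haG⟩) : G) : Fin (q+1) → ℝ) ⬝ᵥ y := rfl
    rw [hMy] at this
    simp only [Equiv.symm_apply_apply] at this
    have ha : a = Fin.snoc (Fin.init a) (a (Fin.last q)) := (Fin.snoc_init_self a).symm
    rw [ha, snoc_dot, Fin.init_snoc, Fin.snoc_last, mul_one]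
    linarith
end
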